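/- arXiv:2012.10046 — 4 statements merged into one kernel-verified Lean document; each statement's English description precedes it below -/
import Mathlib

section
/- Let μ be a probability mass function on S = X₁ × ⋯ × X_N with 1-marginals μ_i and 2-marginals μ_{ij}. Then the block matrix G whose (i,i) diagonal block is diag(μ_i) and whose (i,j) off-diagonal block (i ≠ j) is the matrix μ_{ij}, is positive semidefinite. -/
/-! If `e_x ∈ ℝ^(Σ i, X i)` is the vector whose `i`-th block is the standard basis vector of `x i`,
then `G = ∑ₓ μ(x) e_x e_xᵀ`, a nonnegative combination of rank-one positive semidefinite matrices. -/

open Matrix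

theorem posSemidef_sum_smul_vecMulVec_self {ι n : Type*} [Fintype ι] [Fintype n]
    (w : ι → ℝ) (hw : ∀ x, 0 ≤ w x) (v : ι → n → ℝ) :
    (∑ x, w x • vecMulVec (v x) (v x)).PosSemidef :=
  posSemidef_sum _ fun x _ => (posSemidef_vecMulVec_self_star (v x)).smul (hw x)

def coordIndicator {ι : Type*} {X : ι → Type*} [∀ i, DecidableEq (X i)] (x : ∀ i, X i) :
    (Σ i, X i) → ℝ :=
  fun p => if x p.1 = p.2 then 1 else 0

theorem of_sum_ite_coord_eq_sum_smul_vecMulVec {ι : Type*} {X : ι → Type*}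
    [Fintype (∀ i, X i)] [∀ i, DecidableEq (X i)] (μ : (∀ i, X i) → ℝ) :
    (Matrix.of fun p q : Σ i, X i =>
      ∑ x : (∀ k, X k), if x p.1 = p.2 ∧ x q.1 = q.2 then μ x else 0) =
      ∑ x, μ x • vecMulVec (coordIndicator x) (coordIndicator x) := by
  ext p q
  simp only [of_apply, Matrix.sum_apply, Matrix.smul_apply, vecMulVec_apply, coordIndicator,
    smul_eq_mul]
  refine Finset.sum_congr rfl fun x _ => ?_
  split_ifs <;> simp_all

theorem stmt4_general (N : ℕ) (X : Fin N → Type*)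
    [∀ i, Fintype (X i)] [∀ i, DecidableEq (X i)]
    (μ : (∀ i, X i) → ℝ) (hpos : ∀ x, 0 ≤ μ x) :
    Matrix.PosSemidef (Matrix.of fun p q : Σ i, X i =>
      ∑ x : (∀ k, X k), if x p.1 = p.2 ∧ x q.1 = q.2 then μ x else 0) := by
  rw [of_sum_ite_coord_eq_sum_smul_vecMulVec]
  exact posSemidef_sum_smul_vecMulVec_self μ hpos _

theorem stmt4 (N : ℕ) (X : Fin N → Type*)
    [∀ i, Fintype (X i)] [∀ i, DecidableEq (X i)]
    (μ : (∀ i, X i) → ℝ) (hpos : ∀ x, 0 ≤ μ x) (hsum : (∑ x, μ x) = 1) :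
    Matrix.PosSemidef (Matrix.of fun p q : Σ i, X i =>
      ∑ x : (∀ k, X k), if x p.1 = p.2 ∧ x q.1 = q.2 then μ x else 0) :=
  stmt4_general N X μ hpos
end

section
/- Let μ be a permutation-invariant probability mass function on X^N (X finite, N ≥ 2), with common 1-marginal ρ and common symmetric 2-marginal γ. Then the matrix diag(ρ) + (N−1)γ is positive semidefinite. -/
/-!
Write `n_x(a) = #{k | x k = a}` for the occupation numbers of a configuration `x`.
By exchangeability, `E[n_x(a) n_x(b)] = N (δ_ab ρ(a) + (N - 1) γ(a, b))`, so
`diag ρ + (N - 1) γ = N⁻¹ E[n_x n_xᵀ]` is an average of positive semidefinite rank-one matrices.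
-/

open Finset Matrix

section Exchangeable

variable {ι X : Type*} [Fintype ι] [DecidableEq ι] [Fintype X] {μ : (ι → X) → ℝ}

theorem sum_mul_comp_perm (hμ : ∀ (σ : Equiv.Perm ι) (x : ι → X), μ (x ∘ σ) = μ x)
    (σ : Equiv.Perm ι) (F : (ι → X) → ℝ) :
    ∑ x, μ x * F (x ∘ σ) = ∑ x, μ x * F x := by
  calc ∑ x, μ x * F (x ∘ σ) = ∑ x, μ (x ∘ σ) * F (x ∘ σ) := by simp only [hμ]
    _ = ∑ x, μ x * F x :=
      Fintype.sum_equiv (Equiv.arrowCongr σ.symm (Equiv.refl X)) _ _ fun _ => rfl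

theorem sum_mul_apply_eq (hμ : ∀ (σ : Equiv.Perm ι) (x : ι → X), μ (x ∘ σ) = μ x)
    (i j : ι) (g : X → ℝ) :
    ∑ x, μ x * g (x i) = ∑ x, μ x * g (x j) := by
  simpa using (sum_mul_comp_perm hμ (Equiv.swap i j) fun x => g (x i)).symm

theorem sum_mul_apply_apply_eq (hμ : ∀ (σ : Equiv.Perm ι) (x : ι → X), μ (x ∘ σ) = μ x)
    {i j k l : ι} (hij : i ≠ j) (hkl : k ≠ l) (G : X → X → ℝ) :
    ∑ x, μ x * G (x i) (x j) = ∑ x, μ x * G (x k) (x l) := by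
  obtain ⟨σ, hσi, hσj⟩ :=
    MulAction.is_two_pretransitive_iff.mp (Equiv.Perm.isMultiplyPretransitive ι 2) hkl hij
  rw [Equiv.Perm.smul_def] at hσi hσj
  simpa [hσi, hσj] using sum_mul_comp_perm hμ σ fun x => G (x k) (x l)

theorem sum_mul_card_filter_mul_card_filter [DecidableEq X]
    (hμ : ∀ (σ : Equiv.Perm ι) (x : ι → X), μ (x ∘ σ) = μ x)
    {i j : ι} (hij : i ≠ j) (a b : X) :
    ∑ x, μ x * ((#{k | x k = a} : ℝ) * #{k | x k = b}) =
      Fintype.card ι * ((if a = b then ∑ x, (if x i = a then μ x else 0) else 0) +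
        (Fintype.card ι - 1 : ℝ) * ∑ x, if x i = a ∧ x j = b then μ x else 0) := by
  set pair : X → X → ℝ := fun u v => (if u = a then 1 else 0) * (if v = b then 1 else 0)
  have hdiag : ∀ k, ∑ x, μ x * pair (x k) (x k) =
      if a = b then ∑ x, (if x i = a then μ x else 0) else 0 := by
    intro k
    rw [sum_mul_apply_eq hμ k i fun u => pair u u]
    split_ifs with hab
    · subst hab
      exact sum_congr rfl fun x _ => by by_cases h : x i = a <;> simp [pair, h]
    · refine sum_eq_zero fun x _ => ?_
      by_cases h : x i = a
      · subst h; simp [pair, hab]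
      · simp [pair, h]
  have hoff : ∀ k l, k ≠ l → ∑ x, μ x * pair (x k) (x l) =
      ∑ x, if x i = a ∧ x j = b then μ x else 0 := by
    intro k l hkl
    rw [sum_mul_apply_apply_eq hμ hkl hij]
    exact sum_congr rfl fun x _ => by
      by_cases h₁ : x i = a <;> by_cases h₂ : x j = b <;> simp [pair, h₁, h₂]
  set d := if a = b then ∑ x, (if x i = a then μ x else 0) else 0
  set o := ∑ x, if x i = a ∧ x j = b then μ x else 0
  calc ∑ x, μ x * ((#{k | x k = a} : ℝ) * #{k | x k = b})
      = ∑ k, ∑ l, ∑ x, μ x * pair (x k) (x l) := by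
        simp_rw [natCast_card_filter, sum_mul_sum, mul_sum]
        rw [sum_comm]
        exact sum_congr rfl fun _ _ => sum_comm
    _ = ∑ k : ι, ∑ l : ι, (o + if k = l then d - o else 0) := by
        refine sum_congr rfl fun k _ => sum_congr rfl fun l _ => ?_
        split_ifs with hkl
        · rw [hkl, hdiag]; ring
        · rw [hoff k l hkl]; ring
    _ = Fintype.card ι * (d + (Fintype.card ι - 1 : ℝ) * o) := by
        simp only [sum_add_distrib, sum_ite_eq, mem_univ, if_true, sum_const, card_univ,
          nsmul_eq_mul]
        ring

end Exchangeable

theorem stmt6 (N : ℕ) (hN : 2 ≤ N) (X : Type*) [Fintype X] [DecidableEq X]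
    (μ : (Fin N → X) → ℝ) (hpos : ∀ x, 0 ≤ μ x)
    (hinv : ∀ (σ : Equiv.Perm (Fin N)) (x : Fin N → X), μ (x ∘ σ) = μ x) :
    Matrix.PosSemidef (Matrix.of fun a b : X =>
      (if a = b then (∑ x : Fin N → X, if x ⟨0, by omega⟩ = a then μ x else 0) else 0)
      + (N - 1 : ℝ) *
        (∑ x : Fin N → X,
          if x ⟨0, by omega⟩ = a ∧ x ⟨1, by omega⟩ = b then μ x else 0)) := by
  set n : (Fin N → X) → X → ℝ := fun x a => #{k | x k = a}
  have h01 : (⟨0, by omega⟩ : Fin N) ≠ ⟨1, by omega⟩ := by simp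
  convert ((posSemidef_sum univ fun x _ =>
      (posSemidef_vecMulVec_self_star (n x)).smul (hpos x)).smul
      (inv_nonneg.mpr (Nat.cast_nonneg N) : (0 : ℝ) ≤ (N : ℝ)⁻¹)) using 1
  ext a b
  have h := sum_mul_card_filter_mul_card_filter hinv h01 a b
  rw [Fintype.card_fin] at h
  simp only [n, Matrix.smul_apply, Matrix.sum_apply, vecMulVec_apply,
    star_trivial, smul_eq_mul, of_apply, h]
  field_simp
end

section
/- Let G be a layered directed graph with layers V₁,…,V_N where V₁ and V_N are singletons, edges only between consecutive layers, and edge weights given by matrices H_{i,i+1}. If the shortest path from the source (in V₁) to the destination (in V_N) is unique and passes through vertices x₁⋆,…,x_N⋆, then the linear program minimizing ∑_{i=1}^{N−1} Tr[H_{i,i+1}ᵀ μ_{i,i+1}] over nonnegative matrices μ_{i,i+1} satisfying the flow consistency constraints μ_{i,i+1}ᵀ 1 = μ_{i+1,i+2} 1 for all i, μ_{1,2} 1 = δ_{x₁⋆}, and μ_{N−1,N}ᵀ 1 = δ_{x_N⋆}, has the unique optimal solution μ_{i,i+1} = δ_{x_i⋆} δ_{x_{i+1}⋆}ᵀ. 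-/
/-- Total weight of a path `x` through the layers `V 0, …, V (N-1)` with
edge weights `W i : V i → V (i+1) → ℝ`. -/
def PathWeight (N : ℕ) {V : ℕ → Type*} (W : ∀ i, V i → V (i + 1) → ℝ)
    (x : ∀ i, V i) : ℝ :=
  ∑ i ∈ Finset.range (N - 1), W i (x i) (x (i + 1))

/-- Objective of the shortest-path linear program. -/
def SPObj (N : ℕ) {V : ℕ → Type*} [∀ i, Fintype (V i)]
    (W : ∀ i, V i → V (i + 1) → ℝ) (μ : ∀ i, V i → V (i + 1) → ℝ) : ℝ :=
  ∑ i ∈ Finset.range (N - 1), ∑ a, ∑ b, W i a b * μ i a b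

/-- Feasibility for the shortest-path linear program: nonnegativity, flow
consistency between consecutive pairs of layers, and source/destination
(delta) constraints at `xs 0` and `xs (N-1)`. -/
def SPFeasible (N : ℕ) (hN : 2 ≤ N) {V : ℕ → Type*} [∀ i, Fintype (V i)]
    [∀ i, DecidableEq (V i)]
    (xs : ∀ i, V i) (μ : ∀ i, V i → V (i + 1) → ℝ) : Prop :=
  (∀ i < N - 1, ∀ (a : V i) (b : V (i + 1)), 0 ≤ μ i a b) ∧
  (∀ i, i + 1 < N - 1 → ∀ b : V (i + 1),
    (∑ a, μ i a b) = ∑ c, μ (i + 1) b c) ∧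
  (∀ a : V 0, (∑ b, μ 0 a b) = if a = xs 0 then 1 else 0) ∧
  (∀ b : V (N - 2 + 1), (∑ a, μ (N - 2) a b) =
    if cast (congrArg V (by omega : N - 2 + 1 = N - 1)) b = xs (N - 1)
    then 1 else 0)

/-!
The cost-to-go `costToGo W N i a`, the least weight of a walk from `a ∈ V i` to the last layer,
is a feasible dual potential: `costToGo i a ≤ W i a b + costToGo (i + 1) b`. Telescoping along
the flow constraints writes the objective of any feasible flow as `costToGo 0 (xs 0)` plus the
flow-weighted, nonnegative reduced costs. The path flow of `xs` costs exactly `costToGo 0 (xs 0)`,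
so it is optimal. Uniqueness of the shortest path makes every reduced cost of an edge leaving `xs`
strictly positive, so an optimal flow never leaves `xs`, and conservation from the source forces
it to be the path flow.
-/

section Paths

variable {V : ℕ → Type*} (W : ∀ i, V i → V (i + 1) → ℝ) (N : ℕ)

def suffixWeight (i : ℕ) (y : ∀ j, V j) : ℝ :=
  ∑ j ∈ Finset.Ico i (N - 1), W j (y j) (y (j + 1))

variable {W N}

theorem suffixWeight_of_le {i : ℕ} (hi : N - 1 ≤ i) (y : ∀ j, V j) :
    suffixWeight W N i y = 0 := by
  rw [suffixWeight, Finset.Ico_eq_empty_of_le hi, Finset.sum_empty]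

theorem suffixWeight_eq_add {i : ℕ} (hi : i < N - 1) (y : ∀ j, V j) :
    suffixWeight W N i y = W i (y i) (y (i + 1)) + suffixWeight W N (i + 1) y :=
  Finset.sum_eq_sum_Ico_succ_bot hi _

theorem pathWeight_eq_add_suffixWeight {i : ℕ} (hi : i ≤ N - 1) (y : ∀ j, V j) :
    PathWeight N W y = ∑ j ∈ Finset.range i, W j (y j) (y (j + 1)) + suffixWeight W N i y :=
  (Finset.sum_range_add_sum_Ico _ hi).symm

theorem pathWeight_eq_suffixWeight_zero (y : ∀ j, V j) :
    PathWeight N W y = suffixWeight W N 0 y := by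
  rw [PathWeight, suffixWeight, Finset.range_eq_Ico]

theorem pathWeight_sub_suffixWeight_congr {i : ℕ} (hi : i ≤ N - 1) {x y : ∀ j, V j}
    (hxy : ∀ j ≤ i, y j = x j) :
    PathWeight N W y - suffixWeight W N i y = PathWeight N W x - suffixWeight W N i x := by
  rw [pathWeight_eq_add_suffixWeight hi, pathWeight_eq_add_suffixWeight hi, add_sub_cancel_right,
    add_sub_cancel_right]
  refine Finset.sum_congr rfl fun j hj => ?_
  rw [Finset.mem_range] at hj
  rw [hxy j hj.le, hxy (j + 1) hj]

theorem pathWeight_le_of_unique {xs : ∀ i, V i}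
    (huniq : ∀ y : ∀ i, V i, (∃ i < N, y i ≠ xs i) → PathWeight N W xs < PathWeight N W y)
    (y : ∀ i, V i) : PathWeight N W xs ≤ PathWeight N W y := by
  by_cases hy : ∃ i < N, y i ≠ xs i
  · exact (huniq y hy).le
  push Not at hy
  refine (Finset.sum_congr rfl fun j hj => ?_).le
  rw [Finset.mem_range] at hj
  rw [hy j (by omega), hy (j + 1) (by omega)]

end Paths

section CostToGo

variable {V : ℕ → Type*} [∀ i, Fintype (V i)] [∀ i, Nonempty (V i)]
  (W : ∀ i, V i → V (i + 1) → ℝ) (N : ℕ)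

/-- The least weight of a walk of `k` edges from `a ∈ V i`; recursing on `k` rather than on `i`
keeps the recursion structural. -/
noncomputable def costIn : ℕ → (i : ℕ) → V i → ℝ
  | 0, _, _ => 0
  | k + 1, i, a => Finset.univ.inf' Finset.univ_nonempty fun b => W i a b + costIn k (i + 1) b

noncomputable def costToGo (i : ℕ) (a : V i) : ℝ :=
  costIn W (N - 1 - i) i a

noncomputable def greedyStep (i : ℕ) (a : V i) : V (i + 1) :=
  (Finset.univ.exists_min_image (fun b => W i a b + costToGo W N (i + 1) b)
    Finset.univ_nonempty).choose

noncomputable def greedyPath (x : ∀ j, V j) (i : ℕ) : ∀ j, V j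
  | 0 => x 0
  | j + 1 => if j < i then x (j + 1) else greedyStep W N j (greedyPath x i j)

variable {W N}

theorem costToGo_of_le {i : ℕ} (hi : N - 1 ≤ i) (a : V i) : costToGo W N i a = 0 := by
  rw [costToGo, Nat.sub_eq_zero_of_le hi, costIn]

theorem costToGo_eq_inf' {i : ℕ} (hi : i < N - 1) (a : V i) :
    costToGo W N i a =
      Finset.univ.inf' Finset.univ_nonempty fun b => W i a b + costToGo W N (i + 1) b := by
  rw [costToGo, show N - 1 - i = N - 1 - (i + 1) + 1 by omega, costIn]
  rfl

theorem costToGo_le {i : ℕ} (hi : i < N - 1) (a : V i) (b : V (i + 1)) :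
    costToGo W N i a ≤ W i a b + costToGo W N (i + 1) b := by
  rw [costToGo_eq_inf' hi]
  exact Finset.inf'_le _ (Finset.mem_univ b)

theorem costToGo_eq_greedyStep {i : ℕ} (hi : i < N - 1) (a : V i) :
    costToGo W N i a = W i a (greedyStep W N i a) + costToGo W N (i + 1) (greedyStep W N i a) := by
  refine le_antisymm (costToGo_le hi _ _) ?_
  rw [costToGo_eq_inf' hi]
  exact Finset.le_inf' _ _ fun b _ =>
    (Finset.univ.exists_min_image (fun b => W i a b + costToGo W N (i + 1) b)
      Finset.univ_nonempty).choose_spec.2 b (Finset.mem_univ b)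

theorem costToGo_le_suffixWeight (y : ∀ j, V j) (i : ℕ) :
    costToGo W N i (y i) ≤ suffixWeight W N i y := by
  by_cases hi : i < N - 1
  · rw [suffixWeight_eq_add hi]
    exact (costToGo_le hi _ _).trans (add_le_add le_rfl (costToGo_le_suffixWeight y (i + 1)))
  · rw [costToGo_of_le (not_lt.1 hi), suffixWeight_of_le (not_lt.1 hi)]
termination_by N - 1 - i

theorem greedyPath_of_le (x : ∀ j, V j) {i j : ℕ} (hj : j ≤ i) : greedyPath W N x i j = x j := by
  cases j with
  | zero => rfl
  | succ j => rw [greedyPath, if_pos (by omega)]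

theorem greedyPath_succ (x : ∀ j, V j) {i j : ℕ} (hj : i ≤ j) :
    greedyPath W N x i (j + 1) = greedyStep W N j (greedyPath W N x i j) := by
  rw [greedyPath, if_neg (by omega)]

theorem suffixWeight_greedyPath (x : ∀ j, V j) {i j : ℕ} (hj : i ≤ j) :
    suffixWeight W N j (greedyPath W N x i) = costToGo W N j (greedyPath W N x i j) := by
  by_cases h : j < N - 1
  · rw [suffixWeight_eq_add h, suffixWeight_greedyPath x (by omega : i ≤ j + 1),
      greedyPath_succ x hj, ← costToGo_eq_greedyStep h]
  · rw [costToGo_of_le (not_lt.1 h), suffixWeight_of_le (not_lt.1 h)]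
termination_by N - 1 - j

variable {xs : ∀ i, V i}
  (huniq : ∀ y : ∀ i, V i, (∃ i < N, y i ≠ xs i) → PathWeight N W xs < PathWeight N W y)
include huniq

theorem suffixWeight_eq_costToGo {i : ℕ} (hi : i ≤ N - 1) :
    suffixWeight W N i xs = costToGo W N i (xs i) := by
  refine le_antisymm ?_ (costToGo_le_suffixWeight xs i)
  have hle := pathWeight_le_of_unique huniq (greedyPath W N xs i)
  have hcongr := pathWeight_sub_suffixWeight_congr (W := W) (x := xs) (y := greedyPath W N xs i) hi
    fun j hj => greedyPath_of_le xs hj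
  rw [suffixWeight_greedyPath xs le_rfl, greedyPath_of_le xs le_rfl] at hcongr
  linarith

theorem costToGo_lt_of_ne {i : ℕ} (hi : i < N - 1) {b : V (i + 1)} (hb : b ≠ xs (i + 1)) :
    costToGo W N i (xs i) < W i (xs i) b + costToGo W N (i + 1) b := by
  -- `y` follows `xs` up to layer `i`, steps to `b`, then continues optimally.
  set y := greedyPath W N (Function.update xs (i + 1) b) (i + 1) with hy_def
  have hyb : y (i + 1) = b := by rw [hy_def, greedyPath_of_le _ le_rfl, Function.update_self]
  have hy : ∀ j ≤ i, y j = xs j := fun j hj => by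
    rw [hy_def, greedyPath_of_le _ (by omega), Function.update_of_ne (by omega)]
  have hlt := huniq y ⟨i + 1, by omega, hyb ▸ hb⟩
  have hcongr := pathWeight_sub_suffixWeight_congr (W := W) hi.le hy
  rw [suffixWeight_eq_add hi, suffixWeight_greedyPath _ le_rfl, ← hy_def, hy i le_rfl, hyb,
    suffixWeight_eq_costToGo huniq hi.le] at hcongr
  linarith

end CostToGo

section Flows

variable {V : ℕ → Type*} [∀ i, DecidableEq (V i)]

def pathFlow (xs : ∀ i, V i) (i : ℕ) (a : V i) (b : V (i + 1)) : ℝ :=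
  if a = xs i ∧ b = xs (i + 1) then 1 else 0

variable [∀ i, Fintype (V i)]

theorem spFeasible_pathFlow {N : ℕ} (hN : 2 ≤ N) (xs : ∀ i, V i) :
    SPFeasible N hN xs (pathFlow xs) := by
  refine ⟨fun i _ a b => ?_, fun i _ b => ?_, fun a => ?_, ?_⟩
  · unfold pathFlow
    split_ifs <;> norm_num
  · simp [pathFlow, ite_and, Finset.sum_ite_eq']
  · simp [pathFlow, ite_and, Finset.sum_ite_eq']
  · obtain ⟨M, rfl⟩ : ∃ M, N = M + 2 := ⟨N - 2, by omega⟩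
    intro b
    show (∑ a, pathFlow xs M a b) = if b = xs (M + 1) then 1 else 0
    simp [pathFlow, ite_and, Finset.sum_ite_eq']

theorem spObj_pathFlow (W : ∀ i, V i → V (i + 1) → ℝ) (N : ℕ) (xs : ∀ i, V i) :
    SPObj N W (pathFlow xs) = PathWeight N W xs :=
  Finset.sum_congr rfl fun i _ => by simp [pathFlow, ite_and, mul_ite, Finset.sum_ite_eq']

end Flows

section Duality

variable {V : ℕ → Type*} {W : ∀ i, V i → V (i + 1) → ℝ} {N : ℕ} {xs : ∀ i, V i}
  {μ : ∀ i, V i → V (i + 1) → ℝ} (φ : ∀ i, V i → ℝ)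
  (hφ : ∀ i, N - 1 ≤ i → ∀ a, φ i a = 0)
  (hdual : ∀ i < N - 1, ∀ a b, φ i a ≤ W i a b + φ (i + 1) b)
  (hnonneg : ∀ i < N - 1, ∀ a b, 0 ≤ μ i a b)

include hdual hnonneg in
theorem reducedCost_mul_nonneg {i : ℕ} (hi : i < N - 1) (a : V i) (b : V (i + 1)) :
    0 ≤ (W i a b + φ (i + 1) b - φ i a) * μ i a b :=
  mul_nonneg (by linarith [hdual i hi a b]) (hnonneg i hi a b)

variable [∀ i, Fintype (V i)] [∀ i, DecidableEq (V i)]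
  (hflow : ∀ i, i + 1 < N - 1 → ∀ b : V (i + 1), ∑ a, μ i a b = ∑ c, μ (i + 1) b c)
  (hsrc : ∀ a : V 0, ∑ b, μ 0 a b = if a = xs 0 then 1 else 0)

include hφ hflow hsrc in
theorem spObj_eq_add_reducedCost :
    SPObj N W μ = φ 0 (xs 0) +
      ∑ i ∈ Finset.range (N - 1), ∑ a, ∑ b, (W i a b + φ (i + 1) b - φ i a) * μ i a b := by
  -- `g i` is the potential carried out of layer `i`; flow conservation makes the sum telescope.
  set g : ℕ → ℝ := fun i => ∑ a, (∑ b, μ i a b) * φ i a with hg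
  have hout : ∀ i, ∑ a, ∑ b, φ i a * μ i a b = g i := fun i =>
    Finset.sum_congr rfl fun a _ => by rw [← Finset.mul_sum, mul_comm]
  have hin : ∀ i < N - 1, ∑ a, ∑ b, φ (i + 1) b * μ i a b = g (i + 1) := fun i hi => by
    rw [Finset.sum_comm]
    by_cases h : i + 1 < N - 1
    · refine Finset.sum_congr rfl fun b _ => ?_
      rw [← Finset.mul_sum, hflow i h b, mul_comm]
    · simp [hg, hφ (i + 1) (not_lt.1 h)]
  have hg0 : g 0 = φ 0 (xs 0) := by simp [hg, hsrc, ite_mul]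
  have hgN : g (N - 1) = 0 := by simp [hg, hφ (N - 1) le_rfl]
  calc SPObj N W μ
      = ∑ i ∈ Finset.range (N - 1), ((g i - g (i + 1)) +
          ∑ a, ∑ b, (W i a b + φ (i + 1) b - φ i a) * μ i a b) := by
        refine Finset.sum_congr rfl fun i hi => ?_
        rw [← hout, ← hin i (Finset.mem_range.1 hi)]
        simp only [add_mul, sub_mul, Finset.sum_add_distrib, Finset.sum_sub_distrib]
        ring
    _ = _ := by rw [Finset.sum_add_distrib, Finset.sum_range_sub', hg0, hgN, sub_zero]

include hφ hdual hnonneg hflow hsrc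

theorem potential_le_spObj : φ 0 (xs 0) ≤ SPObj N W μ := by
  rw [spObj_eq_add_reducedCost φ hφ hflow hsrc, le_add_iff_nonneg_right]
  exact Finset.sum_nonneg fun i hi => Finset.sum_nonneg fun a _ => Finset.sum_nonneg fun b _ =>
    reducedCost_mul_nonneg φ hdual hnonneg (Finset.mem_range.1 hi) a b

theorem eq_zero_of_spObj_eq_potential (hobj : SPObj N W μ = φ 0 (xs 0)) {i : ℕ} (hi : i < N - 1)
    {a : V i} {b : V (i + 1)} (hlt : φ i a < W i a b + φ (i + 1) b) : μ i a b = 0 := by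
  rw [spObj_eq_add_reducedCost φ hφ hflow hsrc, add_eq_left,
    Finset.sum_eq_zero_iff_of_nonneg fun j hj => Finset.sum_nonneg fun a _ => Finset.sum_nonneg
      fun b _ => reducedCost_mul_nonneg φ hdual hnonneg (Finset.mem_range.1 hj) a b] at hobj
  have hrow := hobj i (Finset.mem_range.2 hi)
  rw [Finset.sum_eq_zero_iff_of_nonneg fun a _ =>
      Finset.sum_nonneg fun b _ => reducedCost_mul_nonneg φ hdual hnonneg hi a b] at hrow
  have hab := (Finset.sum_eq_zero_iff_of_nonneg fun b _ =>
    reducedCost_mul_nonneg φ hdual hnonneg hi a b).1 (hrow a (Finset.mem_univ a)) b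
    (Finset.mem_univ b)
  exact (mul_eq_zero.1 hab).resolve_left (by linarith)

end Duality

section PathSupport

variable {V : ℕ → Type*} [∀ i, Fintype (V i)] [∀ i, DecidableEq (V i)] {N : ℕ}
  {xs : ∀ i, V i} {μ : ∀ i, V i → V (i + 1) → ℝ}

theorem eq_pathFlow_of_stays_on_path (hnonneg : ∀ i < N - 1, ∀ a b, 0 ≤ μ i a b)
    (hflow : ∀ i, i + 1 < N - 1 → ∀ b : V (i + 1), ∑ a, μ i a b = ∑ c, μ (i + 1) b c)
    (hsrc : ∀ a : V 0, ∑ b, μ 0 a b = if a = xs 0 then 1 else 0)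
    (hstay : ∀ i < N - 1, ∀ b, b ≠ xs (i + 1) → μ i (xs i) b = 0)
    {i : ℕ} (hi : i < N - 1) (a : V i) (b : V (i + 1)) : μ i a b = pathFlow xs i a b := by
  have hzero : ∀ i < N - 1, ∀ a, ∑ b, μ i a b = 0 → ∀ b, μ i a b = 0 := fun i hi a h b =>
    (Finset.sum_eq_zero_iff_of_nonneg fun b _ => hnonneg i hi a b).1 h b (Finset.mem_univ b)
  have hpath : ∀ i < N - 1, ∑ b, μ i (xs i) b = μ i (xs i) (xs (i + 1)) := fun i hi =>
    Finset.sum_eq_single _ (fun b _ hb => hstay i hi b hb) (by simp)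
  have hout : ∀ i < N - 1, ∀ a, ∑ b, μ i a b = if a = xs i then 1 else 0 := by
    intro i
    induction i with
    | zero => exact fun _ => hsrc
    | succ i ih =>
      intro h a
      have ih := ih (by omega)
      rw [← hflow i h a, Finset.sum_eq_single (xs i)
        (fun a' _ ha' => hzero i (by omega) a' (by rw [ih, if_neg ha']) a) (by simp)]
      split_ifs with ha
      · rw [ha, ← hpath i (by omega), ih, if_pos rfl]
      · exact hstay i (by omega) a ha
  unfold pathFlow
  by_cases ha : a = xs i
  · subst ha
    by_cases hb : b = xs (i + 1)
    · rw [hb, ← hpath i hi, hout i hi, if_pos rfl, if_pos ⟨rfl, rfl⟩]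
    · rw [hstay i hi b hb, if_neg fun h => hb h.2]
  · rw [hzero i hi a (by rw [hout i hi, if_neg ha]), if_neg fun h => ha h.1]

end PathSupport

theorem stmt11_general (N : ℕ) (hN : 2 ≤ N) (V : ℕ → Type*)
    [∀ i, Fintype (V i)] [∀ i, DecidableEq (V i)]
    (W : ∀ i, V i → V (i + 1) → ℝ)
    (xs : ∀ i, V i)
    (huniq : ∀ y : ∀ i, V i, (∃ i < N, y i ≠ xs i) →
      PathWeight N W xs < PathWeight N W y) :
    SPFeasible N hN xs
      (fun i a b => if a = xs i ∧ b = xs (i + 1) then (1 : ℝ) else 0) ∧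
    (∀ μ : ∀ i, V i → V (i + 1) → ℝ, SPFeasible N hN xs μ →
      SPObj N W (fun i a b => if a = xs i ∧ b = xs (i + 1) then (1 : ℝ) else 0)
        ≤ SPObj N W μ) ∧
    (∀ μ : ∀ i, V i → V (i + 1) → ℝ, SPFeasible N hN xs μ →
      SPObj N W μ =
        SPObj N W (fun i a b => if a = xs i ∧ b = xs (i + 1) then (1 : ℝ) else 0) →
      ∀ i < N - 1, ∀ (a : V i) (b : V (i + 1)),
        μ i a b = if a = xs i ∧ b = xs (i + 1) then (1 : ℝ) else 0) := by
  have : ∀ i, Nonempty (V i) := fun i => ⟨xs i⟩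
  have hφ : ∀ i, N - 1 ≤ i → ∀ a : V i, costToGo W N i a = 0 := fun _ hi => costToGo_of_le hi
  have hdual : ∀ i < N - 1, ∀ a b, costToGo W N i a ≤ W i a b + costToGo W N (i + 1) b :=
    fun _ hi => costToGo_le hi
  have hopt : SPObj N W (pathFlow xs) = costToGo W N 0 (xs 0) := by
    rw [spObj_pathFlow, pathWeight_eq_suffixWeight_zero,
      suffixWeight_eq_costToGo huniq (Nat.zero_le _)]
  refine ⟨spFeasible_pathFlow hN xs, fun μ hμ => ?_, fun μ hμ hobj i hi a b => ?_⟩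
  · exact hopt ▸ potential_le_spObj _ hφ hdual hμ.1 hμ.2.1 hμ.2.2.1
  · obtain ⟨hnonneg, hflow, hsrc, -⟩ := hμ
    refine eq_pathFlow_of_stays_on_path hnonneg hflow hsrc (fun j hj c hc => ?_) hi a b
    exact eq_zero_of_spObj_eq_potential _ hφ hdual hnonneg hflow hsrc (hobj.trans hopt) hj
      (costToGo_lt_of_ne huniq hj hc)

theorem stmt11 (N : ℕ) (hN : 2 ≤ N) (V : ℕ → Type*)
    [∀ i, Fintype (V i)] [∀ i, DecidableEq (V i)]
    (hV0 : Fintype.card (V 0) = 1) (hVN : Fintype.card (V (N - 1)) = 1)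
    (W : ∀ i, V i → V (i + 1) → ℝ)
    (xs : ∀ i, V i)
    (huniq : ∀ y : ∀ i, V i, (∃ i < N, y i ≠ xs i) →
      PathWeight N W xs < PathWeight N W y) :
    SPFeasible N hN xs
      (fun i a b => if a = xs i ∧ b = xs (i + 1) then (1 : ℝ) else 0) ∧
    (∀ μ : ∀ i, V i → V (i + 1) → ℝ, SPFeasible N hN xs μ →
      SPObj N W (fun i a b => if a = xs i ∧ b = xs (i + 1) then (1 : ℝ) else 0)
        ≤ SPObj N W μ) ∧
    (∀ μ : ∀ i, V i → V (i + 1) → ℝ, SPFeasible N hN xs μ →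
      SPObj N W μ =
        SPObj N W (fun i a b => if a = xs i ∧ b = xs (i + 1) then (1 : ℝ) else 0) →
      ∀ i < N - 1, ∀ (a : V i) (b : V (i + 1)),
        μ i a b = if a = xs i ∧ b = xs (i + 1) then (1 : ℝ) else 0) :=
  stmt11_general N hN V W xs huniq
end

section
/- Suppose ({μ_i}, {μ_{ij}}) is an optimal solution of the 2-marginal semidefinite relaxation of the pairwise minimization problem, and each μ_i is a delta measure, μ_i = δ_{x_i⋆}. Then x⋆ = (x₁⋆,…,x_N⋆} is a global minimizer of H(x) = ∑_{i<j} H_{ij}(x_i, x_j), and the SDP optimal value equals the true minimum E₀. -/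
/-- Feasibility for the 2-marginal semidefinite relaxation: each `μi i` is a
probability vector, the `μij i j` (for `i ≠ j`) are nonnegative, symmetric
under swapping `(i,a)` with `(j,b)`, locally consistent with the 1-marginals,
and the block matrix `G` (with diagonal blocks `diag (μi i)` and off-diagonal
blocks `μij i j`) is positive semidefinite. -/
def SDPFeasible {N : ℕ} {X : Fin N → Type*} [∀ i, Fintype (X i)]
    [∀ i, DecidableEq (X i)] [DecidableEq (Fin N)]
    (μi : ∀ i, X i → ℝ) (μij : ∀ i j, X i → X j → ℝ) : Prop :=
  (∀ i, (∀ a, 0 ≤ μi i a) ∧ (∑ a, μi i a) = 1) ∧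
  (∀ i j, i ≠ j → ∀ (a : X i) (b : X j), 0 ≤ μij i j a b) ∧
  (∀ i j, ∀ (a : X i) (b : X j), μij j i b a = μij i j a b) ∧
  (∀ i j, i ≠ j → (∀ a : X i, (∑ b, μij i j a b) = μi i a) ∧
    (∀ b : X j, (∑ a, μij i j a b) = μi j b)) ∧
  Matrix.PosSemidef (Matrix.of fun p q : Σ i, X i =>
    if h : p.1 = q.1 then
      (if p.2 = cast (congrArg X h.symm) q.2 then μi p.1 p.2 else 0)
    else μij p.1 q.1 p.2 q.2)

/-- Objective of the 2-marginal SDP. -/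
def SDPObj {N : ℕ} {X : Fin N → Type*} [∀ i, Fintype (X i)]
    (Hij : ∀ i j : Fin N, X i → X j → ℝ)
    (μij : ∀ i j, X i → X j → ℝ) : ℝ :=
  ∑ i, ∑ j, if i < j then (∑ a, ∑ b, Hij i j a b * μij i j a b) else 0

/-!
A feasible point whose 1-marginals are the Dirac vectors at `x⋆` is pinned down completely:
a nonnegative coupling of two Dirac vectors is their product, so every pair marginal is the
product Dirac and the SDP value is `H(x⋆)`. Conversely, for every assignment `y` the product
Dirac solution at `y` is feasible (its moment matrix is the rank-one matrix `v vᵀ`, `v` the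
indicator of the graph of `y`) with value `H(y)`; optimality of `μ` gives `H(x⋆) ≤ H(y)`.
-/

open Finset

theorem eq_dirac_mul_dirac_of_marginals {α β : Type*} [Fintype α] [Fintype β]
    [DecidableEq α] [DecidableEq β]
    {ν : α → β → ℝ} (hν : ∀ a b, 0 ≤ ν a b) {a₀ : α} {b₀ : β}
    (hrow : ∀ a, ∑ b, ν a b = if a = a₀ then 1 else 0)
    (hcol : ∀ b, ∑ a, ν a b = if b = b₀ then 1 else 0) (a : α) (b : β) :
    ν a b = (if a = a₀ then 1 else 0) * (if b = b₀ then 1 else 0) := by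
  have hrow_zero : ∀ a, a ≠ a₀ → ∀ b, ν a b = 0 := fun a ha b =>
    (sum_eq_zero_iff_of_nonneg fun b _ => hν a b).mp (by simp [hrow, ha]) b (mem_univ b)
  have hcol_zero : ∀ b, b ≠ b₀ → ∀ a, ν a b = 0 := fun b hb a =>
    (sum_eq_zero_iff_of_nonneg fun a _ => hν a b).mp (by simp [hcol, hb]) a (mem_univ a)
  by_cases ha : a = a₀
  · by_cases hb : b = b₀
    · subst ha hb
      have hsingle : ∑ b', ν a b' = ν a b :=
        sum_eq_single b (fun b' _ hb' => hcol_zero b' hb' a) (by simp)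
      simp [hrow, ← hsingle]
    · simp [hb, hcol_zero b hb]
  · simp [ha, hrow_zero a ha]

theorem sdpObj_congr {N : ℕ} {X : Fin N → Type*} [∀ i, Fintype (X i)]
    (Hij : ∀ i j : Fin N, X i → X j → ℝ) {μij νij : ∀ i j, X i → X j → ℝ}
    (h : ∀ i j, i < j → μij i j = νij i j) : SDPObj Hij μij = SDPObj Hij νij := by
  unfold SDPObj
  refine sum_congr rfl fun i _ => sum_congr rfl fun j _ => ?_
  split_ifs with hij
  · rw [h i j hij]
  · rfl

section SDP

variable {N : ℕ} {X : Fin N → Type*} [∀ i, DecidableEq (X i)]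

def diracMarginals (x : ∀ i, X i) : ∀ i, X i → ℝ := fun i a => if a = x i then 1 else 0

def diracPairMarginals (x : ∀ i, X i) : ∀ i j, X i → X j → ℝ :=
  fun i j a b => diracMarginals x i a * diracMarginals x j b

theorem SDPFeasible.pairMarginal_eq_of_dirac [∀ i, Fintype (X i)] [DecidableEq (Fin N)]
    {x : ∀ i, X i} {μij : ∀ i j, X i → X j → ℝ}
    (h : SDPFeasible (diracMarginals x) μij) {i j : Fin N} (hij : i ≠ j) :
    μij i j = diracPairMarginals x i j := by
  obtain ⟨-, hpos, -, hcons, -⟩ := h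
  funext a b
  exact eq_dirac_mul_dirac_of_marginals (hpos i j hij) (hcons i j hij).1 (hcons i j hij).2 a b

theorem momentMatrix_dirac_eq_vecMulVec [DecidableEq (Fin N)] (x : ∀ i, X i) :
    (Matrix.of fun p q : Σ i, X i =>
      if h : p.1 = q.1 then
        (if p.2 = cast (congrArg X h.symm) q.2 then diracMarginals x p.1 p.2 else 0)
      else diracPairMarginals x p.1 q.1 p.2 q.2) =
    Matrix.vecMulVec (fun p => diracMarginals x p.1 p.2) (fun p => diracMarginals x p.1 p.2) := by
  ext ⟨i, a⟩ ⟨j, b⟩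
  by_cases hij : i = j
  · subst hij
    by_cases hab : a = b
    · subst hab
      by_cases ha : a = x i <;> simp [diracMarginals, Matrix.vecMulVec, ha]
    · by_cases ha : a = x i <;> by_cases hb : b = x i <;>
        simp_all [diracMarginals, Matrix.vecMulVec]
  · simp [hij, diracPairMarginals, Matrix.vecMulVec]

theorem sdpFeasible_dirac [∀ i, Fintype (X i)] [DecidableEq (Fin N)] (x : ∀ i, X i) :
    SDPFeasible (diracMarginals x) (diracPairMarginals x) := by
  refine ⟨fun i => ⟨fun a => by unfold diracMarginals; positivity, by simp [diracMarginals]⟩,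
    fun i j _ a b => by unfold diracPairMarginals diracMarginals; positivity,
    fun i j a b => mul_comm _ _,
    fun i j _ => ⟨fun a => ?_, fun b => ?_⟩, ?_⟩
  · simp [diracPairMarginals, diracMarginals]
  · simp [diracPairMarginals, diracMarginals]
  · rw [momentMatrix_dirac_eq_vecMulVec]
    simpa using Matrix.posSemidef_vecMulVec_self_star fun p : Σ i, X i => diracMarginals x p.1 p.2

theorem sdpObj_diracPairMarginals [∀ i, Fintype (X i)]
    (Hij : ∀ i j : Fin N, X i → X j → ℝ) (x : ∀ i, X i) :
    SDPObj Hij (diracPairMarginals x) = ∑ i, ∑ j, if i < j then Hij i j (x i) (x j) else 0 := by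
  unfold SDPObj diracPairMarginals diracMarginals
  simp [mul_ite]

end SDP

theorem stmt13_general (N : ℕ) (X : Fin N → Type*)
    [∀ i, Fintype (X i)] [∀ i, DecidableEq (X i)]
    (Hij : ∀ i j : Fin N, X i → X j → ℝ)
    (μi : ∀ i, X i → ℝ) (μij : ∀ i j, X i → X j → ℝ)
    (hfeas : SDPFeasible μi μij)
    (hopt : ∀ (νi : ∀ i, X i → ℝ) (νij : ∀ i j, X i → X j → ℝ),
      SDPFeasible νi νij → SDPObj Hij μij ≤ SDPObj Hij νij)
    (xs : ∀ i, X i)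
    (hdelta : ∀ i a, μi i a = if a = xs i then 1 else 0) :
    (∀ y : ∀ i, X i,
      (∑ i, ∑ j, if i < j then Hij i j (xs i) (xs j) else 0)
        ≤ ∑ i, ∑ j, if i < j then Hij i j (y i) (y j) else 0) ∧
    SDPObj Hij μij = ∑ i, ∑ j, if i < j then Hij i j (xs i) (xs j) else 0 := by
  have hμi : μi = diracMarginals xs := funext fun i => funext (hdelta i)
  subst hμi
  have hobj : SDPObj Hij μij = ∑ i, ∑ j, if i < j then Hij i j (xs i) (xs j) else 0 := by
    rw [sdpObj_congr Hij fun i j hij => hfeas.pairMarginal_eq_of_dirac hij.ne,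
      sdpObj_diracPairMarginals]
  refine ⟨fun y => ?_, hobj⟩
  rw [← hobj, ← sdpObj_diracPairMarginals Hij y]
  exact hopt _ _ (sdpFeasible_dirac y)

theorem stmt13 (N : ℕ) (X : Fin N → Type*)
    [∀ i, Fintype (X i)] [∀ i, DecidableEq (X i)] [∀ i, Nonempty (X i)]
    (Hij : ∀ i j : Fin N, X i → X j → ℝ)
    (μi : ∀ i, X i → ℝ) (μij : ∀ i j, X i → X j → ℝ)
    (hfeas : SDPFeasible μi μij)
    (hopt : ∀ (νi : ∀ i, X i → ℝ) (νij : ∀ i j, X i → X j → ℝ),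
      SDPFeasible νi νij → SDPObj Hij μij ≤ SDPObj Hij νij)
    (xs : ∀ i, X i)
    (hdelta : ∀ i a, μi i a = if a = xs i then 1 else 0) :
    (∀ y : ∀ i, X i,
      (∑ i, ∑ j, if i < j then Hij i j (xs i) (xs j) else 0)
        ≤ ∑ i, ∑ j, if i < j then Hij i j (y i) (y j) else 0) ∧
    SDPObj Hij μij = ∑ i, ∑ j, if i < j then Hij i j (xs i) (xs j) else 0 :=
  stmt13_general N X Hij μi μij hfeas hopt xs hdelta
end
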